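/- If Y|T ~ Poisson(μT) with T ~ BS(φ) unit scale, then the conditional (posterior) distribution of T given Y = y is a mixture of two generalized inverse Gaussian distributions with common parameters a = 2μ + φ^{−2}, b = φ^{−2} and orders y + 1/2 and y − 1/2 respectively, with mixture weights proportional to (b/a)^{(y+1/2)/2} K_{y+1/2}(√(ab)) and (b/a)^{(y−1/2)/2} K_{y−1/2}(√(ab)). -/

import Mathlib

/-!
Multiplying the Birnbaum–Saunders density by the Poisson likelihood `e^{-μt} t^y`, the two
exponentials combine into `e^{1/φ²} e^{-(a t + b / t)/2}` with `a = 2μ + φ⁻²`, `b = φ⁻²`, and the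
factor `t^{-1/2} + t^{-3/2}` splits the posterior kernel into the two GIG kernels
`t^{α-1} e^{-(a t + b / t)/2}` of orders `α = y ± 1/2`. The substitution `t = √(b/a) x` turns each
GIG kernel into the integrand of `K_α(√(ab))`, so it integrates to `2 (b/a)^{α/2} K_α(√(ab))`;
normalising the sum of the two kernels therefore gives the mixture of the two normalised kernels
with weights proportional to these integrals.
-/
open MeasureTheory Real Set

noncomputable def besselK (l ω : ℝ) : ℝ :=
  (1/2) * ∫ u in Ioi (0:ℝ), u ^ (l - 1) * Real.exp (-(ω/2) * (u + 1/u))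

noncomputable def bsDensity (φ t : ℝ) : ℝ :=
  (t ^ (-(1:ℝ)/2) + t ^ (-(3:ℝ)/2)) / (2 * Real.sqrt (2*π) * φ) *
    Real.exp (-(t + 1/t - 2) / (2*φ^2))

noncomputable def gigDensity (a b α z : ℝ) : ℝ :=
  (a/b) ^ (α/2) / (2 * besselK α (Real.sqrt (a*b))) * z ^ (α - 1) *
    Real.exp (-(a*z + b/z)/2)

noncomputable def gigKernel (a b l z : ℝ) : ℝ := z ^ (l - 1) * exp (-(a * z + b / z) / 2)

lemma exp_neg_div_le_factorial_mul_pow {c u : ℝ} (hc : 0 < c) (hu : 0 < u) (n : ℕ) :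
    exp (-(c / u)) ≤ n.factorial * (u / c) ^ n := by
  rw [exp_neg, inv_le_comm₀ (exp_pos _) (by positivity)]
  calc (n.factorial * (u / c) ^ n)⁻¹ = (c / u) ^ n / n.factorial := by
        rw [div_pow, div_pow]; field_simp
    _ ≤ exp (c / u) := Real.pow_div_factorial_le_exp _ (by positivity) n

lemma integrableOn_gigKernel {a b : ℝ} (ha : 0 < a) (hb : 0 < b) (l : ℝ) :
    IntegrableOn (gigKernel a b l) (Ioi 0) := by
  obtain ⟨n, hn⟩ : ∃ n : ℕ, -l < n := exists_nat_gt (-l)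
  have hdom : IntegrableOn
      (fun u : ℝ => n.factorial * (2 / b) ^ n * (u ^ (l - 1 + n) * exp (-(a / 2) * u ^ (1:ℝ))))
      (Ioi 0) :=
    (integrableOn_rpow_mul_exp_neg_mul_rpow (by linarith) one_pos (by positivity)).const_mul _
  refine hdom.mono' (Measurable.aestronglyMeasurable (by unfold gigKernel; fun_prop)) ?_
  filter_upwards [ae_restrict_mem measurableSet_Ioi] with u (hu : 0 < u)
  -- `exp (-b / (2u)) ≤ n! (2u / b)ⁿ` trades the essential singularity at 0 for a power of `u`
  have hsplit : exp (-(a * u + b / u) / 2) = exp (-(a / 2) * u) * exp (-((b / 2) / u)) := by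
    rw [← exp_add]; congr 1; field_simp; ring
  rw [gigKernel, norm_of_nonneg (by positivity), hsplit, rpow_one, rpow_add hu, rpow_natCast]
  calc u ^ (l - 1) * (exp (-(a / 2) * u) * exp (-((b / 2) / u)))
      ≤ u ^ (l - 1) * (exp (-(a / 2) * u) * (n.factorial * (u / (b / 2)) ^ n)) := by
        gcongr; exact exp_neg_div_le_factorial_mul_pow (by positivity) hu n
    _ = _ := by field_simp; ring

lemma gigKernel_pos {a b l z : ℝ} (hz : 0 < z) : 0 < gigKernel a b l z := by
  unfold gigKernel; positivity

lemma integral_gigKernel_pos {a b : ℝ} (ha : 0 < a) (hb : 0 < b) (l : ℝ) :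
    0 < ∫ u in Ioi 0, gigKernel a b l u := by
  rw [setIntegral_pos_iff_support_of_nonneg_ae
    (ae_restrict_of_forall_mem measurableSet_Ioi fun z hz => (gigKernel_pos hz).le)
    (integrableOn_gigKernel ha hb l)]
  have hsub : Ioi 0 ⊆ Function.support (gigKernel a b l) ∩ Ioi 0 :=
    fun z hz => ⟨(gigKernel_pos hz).ne', hz⟩
  exact (measure_mono hsub).trans_lt' (by simp)

lemma integral_gigKernel_self (l ω : ℝ) : ∫ u in Ioi 0, gigKernel ω ω l u = 2 * besselK l ω := by
  simp only [besselK, gigKernel]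
  ring_nf

lemma besselK_pos (l : ℝ) {ω : ℝ} (hω : 0 < ω) : 0 < besselK l ω := by
  have h := integral_gigKernel_pos hω hω l
  rw [integral_gigKernel_self] at h
  linarith

lemma gigKernel_sqrt_div_mul {a b : ℝ} (ha : 0 < a) (hb : 0 < b) (l : ℝ) {x : ℝ} (hx : 0 < x) :
    gigKernel a b l (√(b / a) * x) = √(b / a) ^ (l - 1) * gigKernel √(a * b) √(a * b) l x := by
  have hc : 0 < √(b / a) := by positivity
  have hac : a * √(b / a) = √(a * b) := by
    rw [← sqrt_sq ha.le, ← sqrt_mul (sq_nonneg a), sqrt_sq ha.le]; congr 1; field_simp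
  have hbc : b / √(b / a) = √(a * b) := by
    rw [div_eq_iff hc.ne', ← sqrt_mul (by positivity)]
    rw [show a * b * (b / a) = b ^ 2 by field_simp, sqrt_sq hb.le]
  simp only [gigKernel]
  rw [mul_rpow hc.le hx.le, ← mul_assoc, hac, ← div_div, hbc]
  ring

lemma integral_gigKernel {a b : ℝ} (ha : 0 < a) (hb : 0 < b) (l : ℝ) :
    ∫ u in Ioi 0, gigKernel a b l u = 2 * (b / a) ^ (l / 2) * besselK l √(a * b) := by
  have hc : 0 < √(b / a) := by positivity
  calc ∫ u in Ioi 0, gigKernel a b l u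
      = √(b / a) * ∫ x in Ioi 0, gigKernel a b l (√(b / a) * x) := by
        rw [← smul_eq_mul, integral_comp_mul_left_Ioi' _ _ hc, mul_zero]
    _ = √(b / a) * ∫ x in Ioi 0, √(b / a) ^ (l - 1) * gigKernel √(a * b) √(a * b) l x := by
        rw [setIntegral_congr_fun measurableSet_Ioi fun x hx => gigKernel_sqrt_div_mul ha hb l hx]
    _ = √(b / a) ^ l * (2 * besselK l √(a * b)) := by
        rw [integral_const_mul, integral_gigKernel_self, rpow_sub_one hc.ne']
        field_simp
    _ = 2 * (b / a) ^ (l / 2) * besselK l √(a * b) := by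
        rw [sqrt_eq_rpow, ← rpow_mul (by positivity)]; ring_nf

lemma gigDensity_eq_gigKernel_div_integral {a b : ℝ} (ha : 0 < a) (hb : 0 < b) (α z : ℝ) :
    gigDensity a b α z = gigKernel a b α z / ∫ u in Ioi 0, gigKernel a b α u := by
  rw [integral_gigKernel ha hb, gigDensity, gigKernel, ← inv_div b a, inv_rpow (by positivity)]
  ring

lemma exp_mul_pow_mul_bsDensity (φ μ : ℝ) {t : ℝ} (ht : 0 < t) (y : ℕ) :
    exp (-μ * t) * t ^ y * bsDensity φ t = exp (1 / φ ^ 2) / (2 * √(2 * π) * φ) *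
      (gigKernel (2 * μ + 1 / φ ^ 2) (1 / φ ^ 2) (y + 1 / 2) t +
        gigKernel (2 * μ + 1 / φ ^ 2) (1 / φ ^ 2) (y - 1 / 2) t) := by
  have hpow₁ : t ^ ((y : ℝ) + 1 / 2 - 1) = t ^ y * t ^ (-(1 : ℝ) / 2) := by
    rw [← rpow_natCast, ← rpow_add ht]; ring_nf
  have hpow₂ : t ^ ((y : ℝ) - 1 / 2 - 1) = t ^ y * t ^ (-(3 : ℝ) / 2) := by
    rw [← rpow_natCast, ← rpow_add ht]; ring_nf
  have hexp : exp (-μ * t) * exp (-(t + 1 / t - 2) / (2 * φ ^ 2)) =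
      exp (1 / φ ^ 2) * exp (-((2 * μ + 1 / φ ^ 2) * t + 1 / φ ^ 2 / t) / 2) := by
    rw [← exp_add, ← exp_add]; ring_nf
  simp only [bsDensity, gigKernel]
  rw [hpow₁, hpow₂]
  linear_combination t ^ y * (t ^ (-(1:ℝ) / 2) + t ^ (-(3:ℝ) / 2)) / (2 * √(2 * π) * φ) * hexp

theorem posterior_is_gig_mixture (φ μ : ℝ) (hφ : 0 < φ) (hμ : 0 < μ) (y : ℕ) :
    ∀ t ∈ Ioi (0:ℝ),
      Real.exp (-μ * t) * t ^ y * bsDensity φ t /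
          (∫ u in Ioi (0:ℝ), Real.exp (-μ * u) * u ^ y * bsDensity φ u)
        = ((1/φ^2 / (2*μ + 1/φ^2)) ^ (((y:ℝ) + 1/2)/2) *
              besselK ((y:ℝ) + 1/2) (Real.sqrt ((2*μ + 1/φ^2) * (1/φ^2))) /
              ((1/φ^2 / (2*μ + 1/φ^2)) ^ (((y:ℝ) + 1/2)/2) *
                besselK ((y:ℝ) + 1/2) (Real.sqrt ((2*μ + 1/φ^2) * (1/φ^2)))
               + (1/φ^2 / (2*μ + 1/φ^2)) ^ (((y:ℝ) - 1/2)/2) *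
                besselK ((y:ℝ) - 1/2) (Real.sqrt ((2*μ + 1/φ^2) * (1/φ^2))))) *
            gigDensity (2*μ + 1/φ^2) (1/φ^2) ((y:ℝ) + 1/2) t
          + ((1/φ^2 / (2*μ + 1/φ^2)) ^ (((y:ℝ) - 1/2)/2) *
              besselK ((y:ℝ) - 1/2) (Real.sqrt ((2*μ + 1/φ^2) * (1/φ^2))) /
              ((1/φ^2 / (2*μ + 1/φ^2)) ^ (((y:ℝ) + 1/2)/2) *
                besselK ((y:ℝ) + 1/2) (Real.sqrt ((2*μ + 1/φ^2) * (1/φ^2)))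
               + (1/φ^2 / (2*μ + 1/φ^2)) ^ (((y:ℝ) - 1/2)/2) *
                besselK ((y:ℝ) - 1/2) (Real.sqrt ((2*μ + 1/φ^2) * (1/φ^2))))) *
            gigDensity (2*μ + 1/φ^2) (1/φ^2) ((y:ℝ) - 1/2) t := by
  intro t ht
  set a := 2 * μ + 1 / φ ^ 2
  set b := 1 / φ ^ 2
  have hb : 0 < b := by positivity
  have ha : 0 < a := by positivity
  have hposterior : ∀ u ∈ Ioi (0:ℝ), exp (-μ * u) * u ^ y * bsDensity φ u =
      exp b / (2 * √(2 * π) * φ) * (gigKernel a b (y + 1 / 2) u + gigKernel a b (y - 1 / 2) u) :=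
    fun u hu => exp_mul_pow_mul_bsDensity φ μ hu y
  have hK₁ := besselK_pos (y + 1 / 2) (by positivity : 0 < √(a * b))
  have hK₂ := besselK_pos (y - 1 / 2) (by positivity : 0 < √(a * b))
  rw [setIntegral_congr_fun measurableSet_Ioi hposterior, integral_const_mul,
    integral_add (integrableOn_gigKernel ha hb _) (integrableOn_gigKernel ha hb _),
    hposterior t ht, gigDensity_eq_gigKernel_div_integral ha hb,
    gigDensity_eq_gigKernel_div_integral ha hb]
  simp only [integral_gigKernel ha hb]
  -- `field_simp` would rewrite the orders `y ± 1 / 2`, so the Bessel values are made opaque first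
  generalize besselK (y + 1 / 2) √(a * b) = K₁ at hK₁ ⊢
  generalize besselK (y - 1 / 2) √(a * b) = K₂ at hK₂ ⊢
  field_simp
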